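/- Let k ≥ 3 and let G be a connected k-regular graph of order n and diameter 2 that is triangle-free and irreducible, with adjacency matrix A. Let D be the distance matrix of the bipartite double cover B(G), with rows and columns indexed by V ⊕ V. Then D = -2·M + 2·M₄ + 2·X + 3·Y + 2·M₅ - 2·I_{2n}, where M = fromBlocks 0 A A 0, M₄ = fromBlocks A 0 0 A, X = fromBlocks J_n 0 0 J_n, Y = fromBlocks 0 J_n J_n 0, M₅ = fromBlocks 0 I_n I_n 0, J_n is the n×n all-ones matrix, and I_n is the n×n identity matrix. -/

import Mathlib

open SimpleGraph

/-- The bipartite double cover of a graph `G`, on vertex set `V ⊕ V`. -/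
def bipartiteDoubleCover {V : Type*} (G : SimpleGraph V) : SimpleGraph (V ⊕ V) where
  Adj x y :=
    match x, y with
    | Sum.inl u, Sum.inr v => G.Adj u v
    | Sum.inr u, Sum.inl v => G.Adj u v
    | _, _ => False
  symm := ⟨by
    rintro (u | u) (v | v) h
    · exact h.elim
    · exact h.symm
    · exact h.symm
    · exact h.elim⟩
  loopless := ⟨by
    rintro (u | u) h
    · exact h
    · exact h⟩

/-- The distance matrix of a graph `H`, over the reals. -/
noncomputable def distMatrix {W : Type*} (H : SimpleGraph W) : Matrix W W ℝ :=
  Matrix.of fun x y => (H.dist x y : ℝ)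

section Aux

variable {V : Type*} {G : SimpleGraph V}

@[simp] lemma bdc_adj_lr {u v : V} :
    (_root_.bipartiteDoubleCover G).Adj (Sum.inl u) (Sum.inr v) ↔ G.Adj u v := Iff.rfl

@[simp] lemma bdc_adj_rl {u v : V} :
    (_root_.bipartiteDoubleCover G).Adj (Sum.inr u) (Sum.inl v) ↔ G.Adj u v := Iff.rfl

@[simp] lemma bdc_adj_ll {u v : V} :
    (_root_.bipartiteDoubleCover G).Adj (Sum.inl u) (Sum.inl v) ↔ False := Iff.rfl

@[simp] lemma bdc_adj_rr {u v : V} :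
    (_root_.bipartiteDoubleCover G).Adj (Sum.inr u) (Sum.inr v) ↔ False := Iff.rfl

/-- Which side of the double cover a vertex is on, as a natural number. -/
def sideN : V ⊕ V → ℕ := Sum.elim (fun _ => 0) (fun _ => 1)

@[simp] lemma sideN_inl (u : V) : sideN (Sum.inl u : V ⊕ V) = 0 := rfl
@[simp] lemma sideN_inr (u : V) : sideN (Sum.inr u : V ⊕ V) = 1 := rfl

lemma bdc_adj_side {x y : V ⊕ V} (h : (_root_.bipartiteDoubleCover G).Adj x y) :
    sideN x + sideN y = 1 := by
  rcases x with u | u <;> rcases y with v | v <;> simp_all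

lemma bdc_walk_parity {x y : V ⊕ V} (p : (_root_.bipartiteDoubleCover G).Walk x y) :
    (p.length + sideN x + sideN y) % 2 = 0 := by
  induction p with
  | nil => simp only [Walk.length_nil]; omega
  | cons h q ih =>
    have hs := bdc_adj_side h
    rw [Walk.length_cons]
    omega

/-- Projection from the double cover back to the original graph. -/
def bdcProj (G : SimpleGraph V) : _root_.bipartiteDoubleCover G →g G where
  toFun := Sum.elim id id
  map_rel' := by rintro (u | u) (v | v) h <;> first | exact h.elim | exact h

/-- Swapping the two copies is a graph homomorphism of the double cover. -/
def bdcSwap (G : SimpleGraph V) : _root_.bipartiteDoubleCover G →g _root_.bipartiteDoubleCover G where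
  toFun := Sum.swap
  map_rel' := by rintro (u | u) (v | v) h <;> first | exact h.elim | exact h

@[simp] lemma bdcSwap_apply (G : SimpleGraph V) (z : V ⊕ V) : bdcSwap G z = z.swap := rfl

lemma walk_two {u v : V} (p : G.Walk u v) (hp : p.length = 2) :
    ∃ w, G.Adj u w ∧ G.Adj w v := by
  refine ⟨p.getVert 1, ?_, ?_⟩
  · have h := p.adj_getVert_succ (i := 0) (by omega)
    simpa using h
  · have h := p.adj_getVert_succ (i := 1) (by omega)
    have h2 : p.getVert 2 = v := by rw [← hp, p.getVert_length]
    rwa [show (1 + 1 : ℕ) = 2 from rfl, h2] at h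

lemma walk_three {u v : V} (p : G.Walk u v) (hp : p.length = 3) :
    ∃ a b, G.Adj u a ∧ G.Adj a b ∧ G.Adj b v := by
  refine ⟨p.getVert 1, p.getVert 2, ?_, ?_, ?_⟩
  · have h := p.adj_getVert_succ (i := 0) (by omega)
    simpa using h
  · exact p.adj_getVert_succ (i := 1) (by omega)
  · have h := p.adj_getVert_succ (i := 2) (by omega)
    have h2 : p.getVert 3 = v := by rw [← hp, p.getVert_length]
    rwa [show (2 + 1 : ℕ) = 3 from rfl, h2] at h

end Aux

theorem stmt3 {V : Type*} [Fintype V] [DecidableEq V] (G : SimpleGraph V)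
    [DecidableRel G.Adj] (k : ℕ) (hk : 3 ≤ k)
    (hconn : G.Connected) (hreg : G.IsRegularOfDegree k) (hdiam : G.diam = 2)
    (htf : ∀ u v : V, G.Adj u v → ∀ x : V, ¬(G.Adj u x ∧ G.Adj v x))
    (hirr : ∀ u v : V, G.neighborSet u = G.neighborSet v → u = v) :
    distMatrix (_root_.bipartiteDoubleCover G) =
      (-2 : ℝ) • Matrix.fromBlocks 0 (G.adjMatrix ℝ) (G.adjMatrix ℝ) 0
        + (2 : ℝ) • Matrix.fromBlocks (G.adjMatrix ℝ) 0 0 (G.adjMatrix ℝ)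
        + (2 : ℝ) • Matrix.fromBlocks (Matrix.of fun _ _ => (1 : ℝ)) 0 0
            (Matrix.of fun _ _ => (1 : ℝ))
        + (3 : ℝ) • Matrix.fromBlocks 0 (Matrix.of fun _ _ => (1 : ℝ))
            (Matrix.of fun _ _ => (1 : ℝ)) 0
        + (2 : ℝ) • Matrix.fromBlocks 0 (1 : Matrix V V ℝ) (1 : Matrix V V ℝ) 0
        - (2 : ℝ) • (1 : Matrix (V ⊕ V) (V ⊕ V) ℝ) := by
  set B := _root_.bipartiteDoubleCover G with hB
  -- Basic facts about G
  have hediam : G.ediam ≠ ⊤ := G.ediam_ne_top_of_diam_ne_zero (by omega)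
  -- distance 2 between distinct nonadjacent vertices: common neighbor exists
  have common_nbr : ∀ u v : V, u ≠ v → ¬G.Adj u v → ∃ w, G.Adj u w ∧ G.Adj w v := by
    intro u v hne hna
    have h1 : G.dist u v ≤ 2 := hdiam ▸ G.dist_le_diam hediam
    have h0 : G.dist u v ≠ 0 := fun h => hne (hconn.dist_eq_zero_iff.mp h)
    have hA : G.dist u v ≠ 1 := fun h => hna (SimpleGraph.dist_eq_one_iff_adj.mp h)
    have h2 : G.dist u v = 2 := by omega
    obtain ⟨p, hp⟩ := (hconn u v).exists_walk_length_eq_dist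
    exact walk_two p (by omega)
  -- irreducibility + regularity: distinct vertices have a differing neighbor
  have diff_nbr : ∀ w v : V, w ≠ v → ∃ b, G.Adj w b ∧ ¬G.Adj v b := by
    intro w v hne
    by_contra hc
    push_neg at hc
    have hsub : G.neighborFinset w ⊆ G.neighborFinset v := by
      intro b hb
      rw [SimpleGraph.mem_neighborFinset] at *
      exact hc b hb
    have hcard : (G.neighborFinset v).card ≤ (G.neighborFinset w).card := by
      rw [G.card_neighborFinset_eq_degree, G.card_neighborFinset_eq_degree,
        hreg.degree_eq, hreg.degree_eq]
    have heq := Finset.eq_of_subset_of_card_le hsub hcard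
    apply hne
    apply hirr
    have := congrArg (fun s : Finset V => (s : Set V)) heq
    simpa [SimpleGraph.neighborFinset] using this
  -- every vertex has a neighbor
  have nbr_exists : ∀ u : V, ∃ a, G.Adj u a := by
    intro u
    have : 0 < G.degree u := by rw [hreg.degree_eq]; omega
    exact (G.degree_pos_iff_exists_adj u).mp this
  -- path of length 4 between adjacent vertices
  have path4 : ∀ u v : V, G.Adj u v →
      ∃ w b x, G.Adj u w ∧ G.Adj w b ∧ G.Adj b x ∧ G.Adj x v := by
    intro u v huv
    have hcard : 1 < (G.neighborFinset u).card := by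
      rw [G.card_neighborFinset_eq_degree, hreg.degree_eq]; omega
    obtain ⟨w, hw, hwv⟩ := Finset.exists_mem_ne hcard v
    rw [SimpleGraph.mem_neighborFinset] at hw
    have hvw : ¬G.Adj v w := fun h => htf u v huv w ⟨hw, h⟩
    obtain ⟨b, hwb, hvb⟩ := diff_nbr w v hwv
    have hbv : b ≠ v := fun h => hvw (h ▸ hwb).symm
    obtain ⟨x, hbx, hxv⟩ := common_nbr b v hbv (fun h => hvb h.symm)
    exact ⟨w, b, x, hw, hwb, hbx, hxv⟩
  -- path of length 3 between distinct nonadjacent vertices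
  have path3 : ∀ u v : V, u ≠ v → ¬G.Adj u v →
      ∃ w x, G.Adj u w ∧ G.Adj w x ∧ G.Adj x v := by
    intro u v hne hna
    obtain ⟨w, huw, hvw⟩ := diff_nbr u v hne
    have hwv : w ≠ v := fun h => hna (h ▸ huw)
    obtain ⟨x, hwx, hxv⟩ := common_nbr w v hwv (fun h => hvw h.symm)
    exact ⟨w, x, huw, hwx, hxv⟩
  -- Distance computations in B
  have dll_adj : ∀ u v : V, G.Adj u v → B.dist (Sum.inl u) (Sum.inl v) = 4 := by
    intro u v huv
    obtain ⟨w, b, x, h1, h2, h3, h4⟩ := path4 u v huv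
    let W : B.Walk (Sum.inl u) (Sum.inl v) :=
      Walk.cons (bdc_adj_lr.mpr h1) (Walk.cons (bdc_adj_rl.mpr h2)
        (Walk.cons (bdc_adj_lr.mpr h3) (Walk.cons (bdc_adj_rl.mpr h4) Walk.nil)))
    have hWl : W.length = 4 := rfl
    have hle : B.dist (Sum.inl u) (Sum.inl v) ≤ 4 := hWl ▸ SimpleGraph.dist_le W
    have hreach : B.Reachable (Sum.inl u) (Sum.inl v) := ⟨W⟩
    obtain ⟨p, hp⟩ := hreach.exists_walk_length_eq_dist
    have hpar := bdc_walk_parity p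
    simp only [sideN_inl, Nat.add_zero] at hpar
    have h0 : B.dist (Sum.inl u) (Sum.inl v) ≠ 0 :=
      fun h => huv.ne (Sum.inl.inj (hreach.dist_eq_zero_iff.mp h))
    have hn2 : B.dist (Sum.inl u) (Sum.inl v) ≠ 2 := by
      intro h2d
      obtain ⟨c, hc1, hc2⟩ := walk_two (p.map (bdcProj G))
        (by rw [Walk.length_map]; omega)
      exact htf u v huv c ⟨hc1, hc2.symm⟩
    omega
  have dll_nadj : ∀ u v : V, u ≠ v → ¬G.Adj u v →
      B.dist (Sum.inl u) (Sum.inl v) = 2 := by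
    intro u v hne hna
    obtain ⟨w, h1, h2⟩ := common_nbr u v hne hna
    let W : B.Walk (Sum.inl u) (Sum.inl v) :=
      Walk.cons (bdc_adj_lr.mpr h1) (Walk.cons (bdc_adj_rl.mpr h2) Walk.nil)
    have hWl : W.length = 2 := rfl
    have hle : B.dist (Sum.inl u) (Sum.inl v) ≤ 2 := hWl ▸ SimpleGraph.dist_le W
    have hreach : B.Reachable (Sum.inl u) (Sum.inl v) := ⟨W⟩
    obtain ⟨p, hp⟩ := hreach.exists_walk_length_eq_dist
    have hpar := bdc_walk_parity p
    simp only [sideN_inl, Nat.add_zero] at hpar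
    have h0 : B.dist (Sum.inl u) (Sum.inl v) ≠ 0 :=
      fun h => hne (Sum.inl.inj (hreach.dist_eq_zero_iff.mp h))
    omega
  have dlr_adj : ∀ u v : V, G.Adj u v → B.dist (Sum.inl u) (Sum.inr v) = 1 :=
    fun u v huv => SimpleGraph.dist_eq_one_iff_adj.mpr (bdc_adj_lr.mpr huv)
  have dlr_nadj : ∀ u v : V, u ≠ v → ¬G.Adj u v →
      B.dist (Sum.inl u) (Sum.inr v) = 3 := by
    intro u v hne hna
    obtain ⟨w, x, h1, h2, h3⟩ := path3 u v hne hna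
    let W : B.Walk (Sum.inl u) (Sum.inr v) :=
      Walk.cons (bdc_adj_lr.mpr h1) (Walk.cons (bdc_adj_rl.mpr h2)
        (Walk.cons (bdc_adj_lr.mpr h3) Walk.nil))
    have hWl : W.length = 3 := rfl
    have hle : B.dist (Sum.inl u) (Sum.inr v) ≤ 3 := hWl ▸ SimpleGraph.dist_le W
    have hreach : B.Reachable (Sum.inl u) (Sum.inr v) := ⟨W⟩
    obtain ⟨p, hp⟩ := hreach.exists_walk_length_eq_dist
    have hpar := bdc_walk_parity p
    simp only [sideN_inl, sideN_inr, Nat.add_zero] at hpar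
    have h1d : B.dist (Sum.inl u) (Sum.inr v) ≠ 1 :=
      fun h => hna (bdc_adj_lr.mp (SimpleGraph.dist_eq_one_iff_adj.mp h))
    omega
  have dlr_self : ∀ u : V, B.dist (Sum.inl u) (Sum.inr u) = 5 := by
    intro u
    obtain ⟨a, hua⟩ := nbr_exists u
    obtain ⟨w, b, x, h1, h2, h3, h4⟩ := path4 a u hua.symm
    let W : B.Walk (Sum.inl u) (Sum.inr u) :=
      Walk.cons (bdc_adj_lr.mpr hua) (Walk.cons (bdc_adj_rl.mpr h1)
        (Walk.cons (bdc_adj_lr.mpr h2) (Walk.cons (bdc_adj_rl.mpr h3)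
          (Walk.cons (bdc_adj_lr.mpr h4) Walk.nil))))
    have hWl : W.length = 5 := rfl
    have hle : B.dist (Sum.inl u) (Sum.inr u) ≤ 5 := hWl ▸ SimpleGraph.dist_le W
    have hreach : B.Reachable (Sum.inl u) (Sum.inr u) := ⟨W⟩
    obtain ⟨p, hp⟩ := hreach.exists_walk_length_eq_dist
    have hpar := bdc_walk_parity p
    simp only [sideN_inl, sideN_inr, Nat.add_zero] at hpar
    have h1d : B.dist (Sum.inl u) (Sum.inr u) ≠ 1 :=
      fun h => G.loopless.irrefl u (bdc_adj_lr.mp (SimpleGraph.dist_eq_one_iff_adj.mp h))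
    have h3d : B.dist (Sum.inl u) (Sum.inr u) ≠ 3 := by
      intro h3d
      obtain ⟨c, d, hc1, hc2, hc3⟩ := walk_three (p.map (bdcProj G))
        (by rw [Walk.length_map]; omega)
      exact htf c d hc2 u ⟨hc1.symm, hc3⟩
    omega
  -- swapping sides preserves distances
  have swap_le : ∀ x y : V ⊕ V, B.dist x.swap y.swap ≤ B.dist x y := by
    intro x y
    by_cases h : B.Reachable x y
    · obtain ⟨p, hp⟩ := h.exists_walk_length_eq_dist
      have hle := SimpleGraph.dist_le (p.map (bdcSwap G))
      rwa [Walk.length_map, hp] at hle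
    · have hnr : ¬B.Reachable x.swap y.swap :=
        fun hr => h (by simpa using hr.map (bdcSwap G))
      rw [SimpleGraph.dist_eq_zero_of_not_reachable h,
        SimpleGraph.dist_eq_zero_of_not_reachable hnr]
  have dist_swap : ∀ x y : V ⊕ V, B.dist x.swap y.swap = B.dist x y := by
    intro x y
    refine le_antisymm (swap_le x y) ?_
    have := swap_le x.swap y.swap
    simpa [Sum.swap_swap] using this
  -- entrywise computation
  ext x y
  rcases x with u | u <;> rcases y with v | v <;>
    simp only [distMatrix, Matrix.of_apply, Matrix.add_apply, Matrix.sub_apply,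
      Matrix.smul_apply, Matrix.fromBlocks_apply₁₁, Matrix.fromBlocks_apply₁₂,
      Matrix.fromBlocks_apply₂₁, Matrix.fromBlocks_apply₂₂, Matrix.zero_apply,
      SimpleGraph.adjMatrix_apply, Matrix.one_apply, Sum.inl.injEq, Sum.inr.injEq,
      smul_eq_mul, mul_ite, mul_one, mul_zero]
  · by_cases hne : u = v
    · subst hne
      simp [SimpleGraph.dist_self]
    · by_cases hadj : G.Adj u v
      · rw [dll_adj u v hadj]
        norm_num [hadj, hne, reduceCtorEq]
      · rw [dll_nadj u v hne hadj]
        norm_num [hadj, hne, reduceCtorEq]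
  · by_cases hne : u = v
    · subst hne
      rw [dlr_self u]
      simp [G.loopless.irrefl u]
      norm_num
    · by_cases hadj : G.Adj u v
      · rw [dlr_adj u v hadj, if_neg (by simp : ¬(Sum.inl u : V ⊕ V) = Sum.inr v)]
        norm_num [hadj, hne]
      · rw [dlr_nadj u v hne hadj, if_neg (by simp : ¬(Sum.inl u : V ⊕ V) = Sum.inr v)]
        norm_num [hadj, hne]
  · have hcomm : B.dist (Sum.inr u) (Sum.inl v) = B.dist (Sum.inl v) (Sum.inr u) :=
      SimpleGraph.dist_comm
    by_cases hne : u = v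
    · subst hne
      rw [hcomm, dlr_self u]
      simp [G.loopless.irrefl u]
      norm_num
    · by_cases hadj : G.Adj u v
      · rw [hcomm, dlr_adj v u hadj.symm,
          if_neg (by simp : ¬(Sum.inr u : V ⊕ V) = Sum.inl v)]
        norm_num [hadj, hne]
      · rw [hcomm, dlr_nadj v u (Ne.symm hne) (fun h => hadj h.symm),
          if_neg (by simp : ¬(Sum.inr u : V ⊕ V) = Sum.inl v)]
        norm_num [hadj, hne]
  · have hswap : B.dist (Sum.inr u) (Sum.inr v) = B.dist (Sum.inl u) (Sum.inl v) :=
      dist_swap (Sum.inl u) (Sum.inl v)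
    by_cases hne : u = v
    · subst hne
      rw [hswap]
      simp [SimpleGraph.dist_self]
    · by_cases hadj : G.Adj u v
      · rw [hswap, dll_adj u v hadj]
        norm_num [hadj, hne, reduceCtorEq]
      · rw [hswap, dll_nadj u v hne hadj]
        norm_num [hadj, hne, reduceCtorEq]
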